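/- Let S be a Cu-semigroup and let x, y be full elements of S with ρ(x, y) = 0. Then ρ(y, x) = 0 if F_x(S) = ∅, and ρ(y, x) = ∞ if F_x(S) ≠ ∅. -/

import Mathlib

open scoped ENNReal

/-- `x' ≪ x`: for every increasing sequence whose supremum is `≥ x`,
some term of the sequence dominates `x'`. -/
def CuWayBelow {S : Type*} [Preorder S] (x' x : S) : Prop :=
  ∀ f : ℕ → S, Monotone f → ∀ s : S, IsLUB (Set.range f) s → x ≤ s → ∃ n, x' ≤ f n

/-- A `Cu`-semigroup: a partially ordered abelian monoid whose least element is `0`,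
satisfying the axioms (O1)–(O4). -/
class CuSemigroup (S : Type*) extends AddCommMonoid S, PartialOrder S, IsOrderedAddMonoid S where
  zero_le : ∀ x : S, 0 ≤ x
  O1 : ∀ f : ℕ → S, Monotone f → ∃ s : S, IsLUB (Set.range f) s
  O2 : ∀ x : S, ∃ f : ℕ → S, (∀ n, CuWayBelow (f n) (f (n + 1))) ∧ IsLUB (Set.range f) x
  O3 : ∀ {x' x y' y : S}, CuWayBelow x' x → CuWayBelow y' y → CuWayBelow (x' + y') (x + y)
  O4 : ∀ f g : ℕ → S, Monotone f → Monotone g → ∀ a b : S,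
      IsLUB (Set.range f) a → IsLUB (Set.range g) b →
      IsLUB (Set.range fun n => f n + g n) (a + b)

/-- A functional on a `Cu`-semigroup: a map `S → [0,∞]` which is additive, order
preserving, sends `0` to `0`, and preserves suprema of increasing sequences. -/
structure IsCuFunctional {S : Type*} [CuSemigroup S] (Λ : S → ℝ≥0∞) : Prop where
  map_zero : Λ 0 = 0
  map_add : ∀ x y : S, Λ (x + y) = Λ x + Λ y
  mono : Monotone Λ
  map_sup : ∀ f : ℕ → S, Monotone f → ∀ s : S, IsLUB (Set.range f) s → Λ s = ⨆ n, Λ (f n)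

/-- `x` is full if `∞ · x = sup_n (n • x)` is the largest element of `S`. -/
def IsFull {S : Type*} [CuSemigroup S] (x : S) : Prop :=
  ∀ s : S, IsLUB (Set.range fun n : ℕ => n • x) s → ∀ y : S, y ≤ s

/-- `F_w(S) ≠ ∅`: there exists a functional normalized at `w`. -/
def FNormNonempty {S : Type*} [CuSemigroup S] (w : S) : Prop :=
  ∃ Λ : S → ℝ≥0∞, IsCuFunctional Λ ∧ Λ w = 1

/-- The rank ratio `ρ(x, y)`: the infimum of all `r ∈ (0,∞)` with
`λ(x) ≤ r·λ(y)` for every functional `λ`; `∞` if there is no such `r`. -/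
noncomputable def rankRatio {S : Type*} [CuSemigroup S] (x y : S) : ℝ≥0∞ :=
  sInf {r : ℝ≥0∞ | 0 < r ∧ r ≠ ⊤ ∧ ∀ Λ : S → ℝ≥0∞, IsCuFunctional Λ → Λ x ≤ r * Λ y}

/-- `S` has `r`-comparison relative to `w`. -/
def HasRComparison {S : Type*} [CuSemigroup S] (r : ℝ≥0∞) (w : S) : Prop :=
  ∀ x y : S, (∀ Λ : S → ℝ≥0∞, IsCuFunctional Λ → Λ x + r * Λ w ≤ Λ y) → x ≤ y

/-- The radius of comparison of `S` relative to `w`: the infimum of all `r ∈ (0,∞)`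
for which `S` has `r`-comparison relative to `w`; `∞` if there is no such `r`. -/
noncomputable def rc {S : Type*} [CuSemigroup S] (w : S) : ℝ≥0∞ :=
  sInf {r : ℝ≥0∞ | 0 < r ∧ r ≠ ⊤ ∧ HasRComparison r w}

/-!
Rescaling shows that `F_x(S) = ∅` exactly when every functional takes only the values `0` and
`∞` at `x`. In that case a functional vanishing at `x` vanishes everywhere because `x` is full,
so `λ(y) ≤ r·λ(x)` for all `r > 0`. Otherwise some `λ` has `λ(x) = 1`; then `ρ(x, y) = 0`
forces `λ(y) = ∞`, and no finite `r` satisfies `λ(y) ≤ r·λ(x)`.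
-/

namespace CuSemigroup

variable {S : Type*} [CuSemigroup S]

theorem nsmul_monotone (x : S) : Monotone fun n : ℕ => n • x := by
  intro n m hnm
  obtain ⟨k, rfl⟩ := Nat.exists_eq_add_of_le hnm
  show n • x ≤ (n + k) • x
  rw [add_nsmul]
  exact le_add_of_nonneg_right (zero_le _)

end CuSemigroup

namespace IsCuFunctional

variable {S : Type*} [CuSemigroup S] {Λ : S → ℝ≥0∞}

theorem map_nsmul (hΛ : IsCuFunctional Λ) (x : S) (n : ℕ) : Λ (n • x) = n * Λ x := by
  induction n with
  | zero => simpa using hΛ.map_zero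
  | succ n ih =>
    rw [succ_nsmul, hΛ.map_add, ih]
    push_cast
    ring

theorem const_mul (hΛ : IsCuFunctional Λ) (c : ℝ≥0∞) : IsCuFunctional fun z => c * Λ z where
  map_zero := by simp [hΛ.map_zero]
  map_add a b := by simp only [hΛ.map_add, mul_add]
  mono _ _ hab := mul_le_mul_right (hΛ.mono hab) c
  map_sup f hf s hs := by simp only [hΛ.map_sup f hf s hs, ENNReal.mul_iSup]

theorem eq_zero_of_isFull (hΛ : IsCuFunctional Λ) {x : S} (hx : IsFull x) (hΛx : Λ x = 0)
    (y : S) : Λ y = 0 := by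
  obtain ⟨s, hs⟩ := CuSemigroup.O1 _ (CuSemigroup.nsmul_monotone x)
  have hΛs : Λ s = 0 := by
    simp [hΛ.map_sup _ (CuSemigroup.nsmul_monotone x) s hs, hΛ.map_nsmul, hΛx]
  exact le_antisymm (hΛs ▸ hΛ.mono (hx s hs y)) bot_le

theorem eq_zero_or_eq_top_of_not_fNormNonempty (hΛ : IsCuFunctional Λ) {x : S}
    (hx : ¬ FNormNonempty x) : Λ x = 0 ∨ Λ x = ⊤ := by
  by_contra! hΛx
  exact hx ⟨_, hΛ.const_mul (Λ x)⁻¹, ENNReal.inv_mul_cancel hΛx.1 hΛx.2⟩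

end IsCuFunctional

section RankRatio

open Filter Topology

variable {S : Type*} [CuSemigroup S]

theorem rankRatio_eq_zero_iff {x y : S} :
    rankRatio x y = 0 ↔ ∀ Λ, IsCuFunctional Λ → ∀ r, 0 < r → Λ x ≤ r * Λ y := by
  constructor
  · intro h Λ hΛ r hr
    obtain ⟨r', ⟨-, -, hr'⟩, hr'r⟩ := sInf_lt_iff.mp (h.symm ▸ hr : rankRatio x y < r)
    exact (hr' Λ hΛ).trans (mul_le_mul_left hr'r.le _)
  · intro h
    refine le_antisymm (le_of_forall_gt_imp_ge_of_dense fun r hr => ?_) bot_le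
    rcases eq_or_ne r ⊤ with rfl | hr_top
    · exact le_top
    · exact sInf_le ⟨hr, hr_top, fun Λ hΛ => h Λ hΛ r hr⟩

theorem rankRatio_eq_top_of_apply_eq_top {x y : S} {Λ : S → ℝ≥0∞} (hΛ : IsCuFunctional Λ)
    (hΛx : Λ x = ⊤) (hΛy : Λ y ≠ ⊤) : rankRatio x y = ⊤ := by
  refine sInf_eq_top.mpr fun r ⟨_, hr_top, hr⟩ => absurd (hr Λ hΛ) ?_
  rw [hΛx, top_le_iff]
  exact ENNReal.mul_ne_top hr_top hΛy

theorem IsCuFunctional.eq_zero_of_rankRatio_eq_zero {x y : S} {Λ : S → ℝ≥0∞}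
    (hΛ : IsCuFunctional Λ) (h : rankRatio x y = 0) (hΛy : Λ y ≠ ⊤) : Λ x = 0 := by
  have hlim : Tendsto (fun r => r * Λ y) (𝓝[>] 0) (𝓝 0) := by
    simpa using tendsto_nhdsWithin_of_tendsto_nhds
      (ENNReal.Tendsto.mul_const (tendsto_id (x := 𝓝 (0 : ℝ≥0∞))) (Or.inr hΛy))
  refine le_antisymm (ge_of_tendsto hlim ?_) bot_le
  filter_upwards [self_mem_nhdsWithin] with r hr
  exact rankRatio_eq_zero_iff.mp h Λ hΛ r hr

end RankRatio

theorem stmt7_general {S : Type*} [CuSemigroup S] (x y : S)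
    (hx : IsFull x) (h : rankRatio x y = 0) :
    (¬ FNormNonempty x → rankRatio y x = 0) ∧
      (FNormNonempty x → rankRatio y x = ⊤) := by
  refine ⟨fun hF => rankRatio_eq_zero_iff.mpr fun Λ hΛ r hr => ?_, fun ⟨Λ, hΛ, hΛx⟩ => ?_⟩
  · rcases hΛ.eq_zero_or_eq_top_of_not_fNormNonempty hF with hΛx | hΛx
    · simp [hΛ.eq_zero_of_isFull hx hΛx y]
    · simp [hΛx, ENNReal.mul_top hr.ne']
  · have hΛy : Λ y = ⊤ := by
      by_contra hΛy
      simpa [hΛx] using hΛ.eq_zero_of_rankRatio_eq_zero h hΛy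
    exact rankRatio_eq_top_of_apply_eq_top hΛ hΛy (by simp [hΛx])

/-- Lemma (lemRhoInvese): for full elements `x, y` with `ρ(x, y) = 0`,
`ρ(y, x) = 0` if `F_x(S) = ∅` and `ρ(y, x) = ∞` if `F_x(S) ≠ ∅`. -/
theorem stmt7 {S : Type*} [CuSemigroup S] (x y : S)
    (hx : IsFull x) (hy : IsFull y) (h : rankRatio x y = 0) :
    (¬ FNormNonempty x → rankRatio y x = 0) ∧
      (FNormNonempty x → rankRatio y x = ⊤) :=
  stmt7_general x y hx h
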